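/- arXiv:1405.6863 — 3 statements merged into one kernel-verified Lean document; each statement's English description precedes it below -/
import Mathlib

section
/- Let K, L ≥ 1 and let q^A : ℕ^K → ℝ and q^B : ℕ^L → ℝ be arbitrary functions. Fix a sample configuration (a,b,c) with c ≥ 2. Then the λ = 1 term of the Gaussian sampling formula equals q_1; that is, Σ_{r ∈ Φ_2} Σ_{ξ ∈ P₂(2)} [∏_{i=1}^K ∏_{j=1}^L binom(c_{ij}, r_{ij})] × [Σ_{I ⊆ {1} : h^A_{μ_1} = h^A_{ν_1} if 1 ∈ I} (−1)^{1−|I|} q^A(a + c_A − r_A^{(ν_I)})] × [Σ_{J ⊆ {1} : h^B_{μ_1} = h^B_{ν_1} if 1 ∈ J} (−1)^{1−|J|} q^B(b + c_B − r_B^{(ν_J)})] = binom(c,2) q^A(a+c_A) q^B(b+c_B) − q^B(b+c_B) Σ_{i=1}^K binom(c_{i·},2) q^A(a+c_A−e_i) − q^A(a+c_A) Σ_{j=1}^L binom(c_{·j},2) q^B(b+c_B−e_j) + Σ_{i=1}^K Σ_{j=1}^L binom(c_{ij},2) q^A(a+c_A−e_i) q^B(b+c_B−e_j). -/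
open scoped BigOperators

/-- `Φ₂`: the (finite) set of matrices `r ∈ ℕ^{K×L}` with total `2`. -/
noncomputable def Phi2 (K L : ℕ) : Finset (Fin K → Fin L → ℕ) :=
  (Fintype.piFinset fun _ : Fin K =>
      Fintype.piFinset fun _ : Fin L => Finset.range 3).filter
    (fun r => ∑ i, ∑ j, r i j = 2)

/-- The first-order coefficient `q₁(a,b,c)` of the asymptotic sampling formula. -/
noncomputable def q1expr {K L : ℕ} (qA : (Fin K → ℕ) → ℝ) (qB : (Fin L → ℕ) → ℝ)
    (a : Fin K → ℕ) (b : Fin L → ℕ) (c : Fin K → Fin L → ℕ) : ℝ :=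
  ((∑ i, ∑ j, c i j).choose 2 : ℝ) *
      qA (fun i => a i + ∑ j, c i j) * qB (fun j => b j + ∑ i, c i j)
    - qB (fun j => b j + ∑ i, c i j) *
        ∑ i, ((∑ j, c i j).choose 2 : ℝ) *
          qA (fun i' => a i' + ∑ j', c i' j' - if i' = i then 1 else 0)
    - qA (fun i => a i + ∑ j, c i j) *
        ∑ j, ((∑ i, c i j).choose 2 : ℝ) *
          qB (fun j' => b j' + ∑ i', c i' j' - if j' = j then 1 else 0)
    + ∑ i, ∑ j, ((c i j).choose 2 : ℝ) *
        qA (fun i' => a i' + ∑ j', c i' j' - if i' = i then 1 else 0) *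
        qB (fun j' => b j' + ∑ i', c i' j' - if j' = j then 1 else 0)

/-! A matrix `r ∈ Φ₂` is the multiplicity matrix of exactly the ordered pairs of haplotypes
`(H r 0, H r 1)` and `(H r 1, H r 0)`, and `∏ binom(c_ij, r_ij)` counts the unordered pairs of
sampled individuals of those haplotypes. So the `λ = 1` term is half a sum over ordered pairs
`(p, q)` weighted by `c_p c_q - [p = q] c_p`. Expanding the product of the two brackets leaves
four such sums, against the indicators that `p` and `q` share their `A`-allele, their
`B`-allele, both, or nothing; grouping by the shared value `v`, each collapses to
`2 Σ_v binom(n_v, 2) f v` with `n_v` the number of sampled individuals carrying `v`, and these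
are the four terms of `q₁`. -/

open Finset

theorem Multiset.pair_eq_pair_iff {α : Type*} {a b c d : α} :
    ({a, b} : Multiset α) = {c, d} ↔ a = c ∧ b = d ∨ a = d ∧ b = c := by
  simp only [Multiset.insert_eq_cons, Multiset.cons_eq_cons, Multiset.singleton_inj,
    Multiset.singleton_eq_cons_iff]
  constructor
  · rintro (h | ⟨-, cs, ⟨rfl, rfl⟩, rfl, -⟩) <;> simp_all
  · rintro (⟨rfl, rfl⟩ | ⟨rfl, rfl⟩)
    · simp
    · by_cases h : a = b
      · simp [h]
      · exact Or.inr ⟨h, 0, by simp⟩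

theorem prod_choose_count_pair {α : Type*} [Fintype α] [DecidableEq α] (c : α → ℕ)
    (p q : α) :
    ∏ z, (c z).choose (Multiset.count z {p, q}) =
      if p = q then (c p).choose 2 else c p * c q := by
  split_ifs with hpq
  · subst hpq
    rw [prod_eq_single p (fun z _ hz => by simp [hz]) (by simp)]
    simp
  · rw [← prod_subset (subset_univ {p, q}) (fun z _ hz => by simp_all), prod_pair hpq]
    simp [hpq, Ne.symm hpq]

theorem Finset.sum_filter_fst_eq {β γ M : Type*} [Fintype β] [Fintype γ] [DecidableEq β]
    [AddCommMonoid M] (f : β × γ → M) (b : β) :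
    ∑ z with z.1 = b, f z = ∑ g, f (b, g) := by
  rw [sum_filter, Fintype.sum_prod_type, sum_eq_single b (fun x _ hx => by simp [hx]) (by simp)]
  simp

theorem Finset.sum_filter_snd_eq {β γ M : Type*} [Fintype β] [Fintype γ] [DecidableEq γ]
    [AddCommMonoid M] (f : β × γ → M) (g : γ) :
    ∑ z with z.2 = g, f z = ∑ b, f (b, g) := by
  rw [sum_filter, Fintype.sum_prod_type_right,
    sum_eq_single g (fun x _ hx => by simp [hx]) (by simp)]
  simp

theorem ite_eq_apply_comm {β M : Type*} [DecidableEq β] [Zero M] (F : β → M) (x y : β) :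
    (if x = y then F y else 0) = if y = x then F x else 0 := by
  obtain rfl | h := eq_or_ne x y
  · rfl
  · rw [if_neg h, if_neg h.symm]

section PairWeight

variable {α β R : Type*} [Fintype α] [DecidableEq α] [Fintype β] [DecidableEq β]
  [Field R] [CharZero R]

/-- The number of ordered pairs of distinct individuals of types `p` and `q` in a sample with
`c z` individuals of type `z`. -/
def pairWeight (c : α → ℕ) (p q : α) : R :=
  c p * c q - if p = q then (c p : R) else 0

theorem sum_pairWeight_mul_ite_eq (c : α → ℕ) (π : α → β) (f : β → R) :
    ∑ p, ∑ q, pairWeight c p q * (if π p = π q then f (π q) else 0) =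
      2 * ∑ b, ((∑ p with π p = b, c p).choose 2 : R) * f b := by
  set S : β → ℕ := fun b => ∑ p with π p = b, c p
  have inner (p : α) : ∑ q, pairWeight c p q * (if π p = π q then f (π q) else 0) =
      (c p * S (π p) - c p) * f (π p) := by
    calc _ = ∑ q with π q = π p, pairWeight c p q * f (π p) := by
            rw [sum_filter]
            refine sum_congr rfl fun q _ => ?_
            obtain h | h := eq_or_ne (π q) (π p)
            · simp [h]
            · simp [h, h.symm]
      _ = _ := by
            simp only [pairWeight, ← sum_mul, sum_sub_distrib, ← mul_sum, sum_ite_eq,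
              mem_filter, mem_univ, true_and, if_true, S, Nat.cast_sum]
  calc _ = ∑ p, (c p * S (π p) - c p : R) * f (π p) := sum_congr rfl fun p _ => inner p
    _ = ∑ b, ∑ p with π p = b, (c p * S b - c p : R) * f b := by
          rw [← sum_fiberwise univ π]
          refine sum_congr rfl fun b _ => sum_congr rfl fun p hp => ?_
          rw [(mem_filter.1 hp).2]
    _ = ∑ b, (S b * S b - S b : R) * f b := by
          simp only [← sum_mul, sum_sub_distrib, S, Nat.cast_sum]
    _ = _ := by
          rw [mul_sum]
          refine sum_congr rfl fun b _ => ?_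
          rw [Nat.cast_choose_two]
          ring

end PairWeight

section Product

variable {β γ R : Type*} [DecidableEq β] [DecidableEq γ]

theorem ite_fst_sub_mul_ite_snd_sub [CommRing R] (fA : β → R) (fB : γ → R) (x y : R)
    (p q : β × γ) :
    ((if p.1 = q.1 then fA q.1 else 0) - x) * ((if p.2 = q.2 then fB q.2 else 0) - y) =
      (if p = q then fA q.1 * fB q.2 else 0) - y * (if p.1 = q.1 then fA q.1 else 0)
        - x * (if p.2 = q.2 then fB q.2 else 0) + x * y := by
  obtain rfl | hpq := eq_or_ne p q
  · simp only [if_true]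
    ring
  · have hprod : (if p.1 = q.1 then fA q.1 else 0) * (if p.2 = q.2 then fB q.2 else 0) = 0 := by
      by_cases h : p.1 = q.1
      · rw [if_neg fun h' => hpq (Prod.ext h h'), mul_zero]
      · rw [if_neg h, zero_mul]
    rw [if_neg hpq]
    linear_combination hprod

variable [Fintype β] [Fintype γ] [Field R] [CharZero R]

theorem sum_pairWeight_mul_sub_mul_sub (c : β → γ → ℕ) (fA : β → R) (fB : γ → R)
    (x y : R) :
    ∑ p, ∑ q, pairWeight (fun z : β × γ => c z.1 z.2) p q *
        (((if p.1 = q.1 then fA q.1 else 0) - x) * ((if p.2 = q.2 then fB q.2 else 0) - y)) =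
      2 * (((∑ i, ∑ j, c i j).choose 2 : R) * x * y
        - y * ∑ i, ((∑ j, c i j).choose 2 : R) * fA i
        - x * ∑ j, ((∑ i, c i j).choose 2 : R) * fB j
        + ∑ i, ∑ j, ((c i j).choose 2 : R) * fA i * fB j) := by
  set c' : β × γ → ℕ := fun z => c z.1 z.2
  have hAB : ∑ p, ∑ q, pairWeight c' p q * (if p = q then fA q.1 * fB q.2 else 0) =
      2 * ∑ i, ∑ j, ((c i j).choose 2 : R) * fA i * fB j := by
    have := sum_pairWeight_mul_ite_eq (R := R) c' id (fun z => fA z.1 * fB z.2)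
    simp only [id, filter_eq', mem_univ, if_true, sum_singleton, c'] at this
    rw [this, Fintype.sum_prod_type]
    simp only [mul_assoc]
  have hA := sum_pairWeight_mul_ite_eq (R := R) c' Prod.fst fA
  have hB := sum_pairWeight_mul_ite_eq (R := R) c' Prod.snd fB
  have hall := sum_pairWeight_mul_ite_eq (R := R) c' (fun _ => ()) (fun _ => 1)
  simp only [sum_filter_fst_eq, sum_filter_snd_eq, c'] at hA hB
  simp only [if_true, mul_one, filter_true, univ_unique, sum_singleton] at hall
  calc _ = ∑ p, ∑ q, (pairWeight c' p q * (if p = q then fA q.1 * fB q.2 else 0)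
          - y * (pairWeight c' p q * (if p.1 = q.1 then fA q.1 else 0))
          - x * (pairWeight c' p q * (if p.2 = q.2 then fB q.2 else 0))
          + x * y * pairWeight c' p q) := by
        refine sum_congr rfl fun p _ => sum_congr rfl fun q _ => ?_
        rw [ite_fst_sub_mul_ite_snd_sub]
        ring
    _ = _ := by
        simp only [sum_add_distrib, sum_sub_distrib, ← mul_sum]
        rw [hAB, hA, hB, hall, Fintype.sum_prod_type]
        ring

end Product

variable {K L : ℕ}

def pairMatrix (p q : Fin K × Fin L) : Fin K → Fin L → ℕ :=
  fun i j => Multiset.count (i, j) {p, q}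

theorem pairMatrix_comm (p q : Fin K × Fin L) : pairMatrix p q = pairMatrix q p := by
  unfold pairMatrix
  rw [Multiset.pair_comm p q]

theorem pairMatrix_eq_iff {p q p' q' : Fin K × Fin L} :
    pairMatrix p q = pairMatrix p' q' ↔ p = p' ∧ q = q' ∨ p = q' ∧ q = p' := by
  rw [← Multiset.pair_eq_pair_iff, Multiset.ext, funext_iff, Prod.forall]
  simp only [funext_iff, pairMatrix]

theorem pairMatrix_mem_Phi2 (p q : Fin K × Fin L) : pairMatrix p q ∈ Phi2 K L := by
  have hcard : ∑ i, ∑ j, pairMatrix p q i j = 2 := by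
    rw [← Fintype.sum_prod_type' (f := fun i j => pairMatrix p q i j)]
    simp [pairMatrix]
  refine mem_filter.2
    ⟨Fintype.mem_piFinset.2 fun i => Fintype.mem_piFinset.2 fun j => ?_, hcard⟩
  exact mem_range.2 (Nat.lt_succ_of_le ((Multiset.count_le_card _ _).trans (by simp)))

theorem pairMatrix_eq_of_card_filter {h : Fin 2 → Fin K × Fin L} {r : Fin K → Fin L → ℕ}
    (hr : ∀ i j, #{α | h α = (i, j)} = r i j) : pairMatrix (h 0) (h 1) = r := by
  funext i j
  rw [← hr, card_filter, Fin.sum_univ_two, pairMatrix]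
  simp [Multiset.count_cons, Multiset.count_singleton, eq_comm, add_comm]

theorem prod_choose_pairMatrix (c : Fin K → Fin L → ℕ) (p q : Fin K × Fin L) :
    ∏ i, ∏ j, (c i j).choose (pairMatrix p q i j) =
      if p = q then (c p.1 p.2).choose 2 else c p.1 p.2 * c q.1 q.2 := by
  rw [← Fintype.prod_prod_type' (f := fun i j => (c i j).choose (pairMatrix p q i j))]
  exact prod_choose_count_pair (fun z => c z.1 z.2) p q

section Phi2

variable {R : Type*} [Field R] [CharZero R]
  (H : (Fin K → Fin L → ℕ) → Fin 2 → Fin K × Fin L)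
  (hH : ∀ r, ∑ i, ∑ j, r i j = 2 →
    ∀ i j, (Finset.univ.filter (fun α => H r α = (i, j))).card = r i j)
include hH

theorem sum_Phi2_eq_sum_pairs (Ψ : Fin K × Fin L → Fin K × Fin L → R)
    (hΨ : ∀ p q, Ψ p q = Ψ q p) :
    ∑ r ∈ Phi2 K L, Ψ (H r 0) (H r 1) =
      ∑ p, ∑ q, (if p = q then 1 else 1 / 2) * Ψ p q := by
  set w : (Fin K × Fin L) × (Fin K × Fin L) → R :=
    fun z => (if z.1 = z.2 then 1 else 1 / 2) * Ψ z.1 z.2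
  have fiber (r) (hr : r ∈ Phi2 K L) :
      ∑ z with pairMatrix z.1 z.2 = r, w z = Ψ (H r 0) (H r 1) := by
    have hrH := pairMatrix_eq_of_card_filter (hH r (mem_filter.1 hr).2)
    generalize H r 0 = p, H r 1 = q at hrH ⊢
    subst hrH
    have hfiber : univ.filter (fun z : (Fin K × Fin L) × (Fin K × Fin L) =>
        pairMatrix z.1 z.2 = pairMatrix p q) = {(p, q), (q, p)} := by
      ext z
      simp [pairMatrix_eq_iff, Prod.ext_iff]
    rw [hfiber]
    obtain rfl | hpq := eq_or_ne p q
    · simp [w]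
    · rw [sum_pair (by simp [hpq])]
      simp only [w, if_neg hpq, if_neg hpq.symm, hΨ q p]
      ring
  rw [← Fintype.sum_prod_type' (f := fun p q => (if p = q then (1 : R) else 1 / 2) * Ψ p q),
    ← sum_fiberwise_of_maps_to (t := Phi2 K L)
      (g := fun z : (Fin K × Fin L) × (Fin K × Fin L) => pairMatrix z.1 z.2)
      (fun z _ => pairMatrix_mem_Phi2 z.1 z.2)]
  exact (sum_congr rfl fiber).symm

theorem sum_Phi2_prod_choose_mul_eq_half_sum_pairWeight (c : Fin K → Fin L → ℕ)
    (G : Fin K × Fin L → Fin K × Fin L → R) (hG : ∀ p q, G p q = G q p) :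
    ∑ r ∈ Phi2 K L, (∏ i, ∏ j, ((c i j).choose (r i j) : R)) * G (H r 0) (H r 1) =
      1 / 2 * ∑ p, ∑ q, pairWeight (fun z : Fin K × Fin L => c z.1 z.2) p q * G p q := by
  set Ψ : Fin K × Fin L → Fin K × Fin L → R :=
    fun p q => (∏ i, ∏ j, ((c i j).choose (pairMatrix p q i j) : R)) * G p q
  calc _ = ∑ r ∈ Phi2 K L, Ψ (H r 0) (H r 1) :=
        sum_congr rfl fun r hr => by
          simp only [Ψ, pairMatrix_eq_of_card_filter (hH r (mem_filter.1 hr).2)]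
    _ = ∑ p, ∑ q, (if p = q then 1 else 1 / 2) * Ψ p q :=
        sum_Phi2_eq_sum_pairs H hH Ψ fun p q => by simp only [Ψ, pairMatrix_comm p q, hG p q]
    _ = _ := by
        simp only [mul_sum]
        refine sum_congr rfl fun p _ => sum_congr rfl fun q _ => ?_
        simp only [Ψ, ← Nat.cast_prod, prod_choose_pairMatrix, pairWeight]
        split_ifs with hpq
        · subst hpq
          rw [Nat.cast_choose_two]
          ring
        · push_cast
          ring

end Phi2

/-- The unique partition of `{1,2}` is `{{μ₁,ν₁}} = {{1,2}}`; for each `r ∈ Φ₂`, `H r` is a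
fixed list of two haplotypes with multiplicity matrix `r`; the brackets are the explicit
two-term sums over `I ⊆ {1}` and `J ⊆ {1}`. -/
theorem lambda_one_term_eq_q1_general (K L : ℕ)
    (qA : (Fin K → ℕ) → ℝ) (qB : (Fin L → ℕ) → ℝ)
    (a : Fin K → ℕ) (b : Fin L → ℕ) (c : Fin K → Fin L → ℕ)
    (H : (Fin K → Fin L → ℕ) → Fin 2 → Fin K × Fin L)
    (hH : ∀ r, ∑ i, ∑ j, r i j = 2 →
      ∀ i j, (Finset.univ.filter (fun α => H r α = (i, j))).card = r i j) :
    (∑ r ∈ Phi2 K L,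
        (∏ i, ∏ j, ((c i j).choose (r i j) : ℝ)) *
          ((if (H r 0).1 = (H r 1).1 then
              qA (fun i => a i + ∑ j, c i j - if (H r 1).1 = i then 1 else 0)
            else 0) - qA (fun i => a i + ∑ j, c i j)) *
          ((if (H r 0).2 = (H r 1).2 then
              qB (fun j => b j + ∑ i, c i j - if (H r 1).2 = j then 1 else 0)
            else 0) - qB (fun j => b j + ∑ i, c i j)))
      = q1expr qA qB a b c := by
  set QA : Fin K → ℝ := fun k => qA (fun i => a i + ∑ j, c i j - if k = i then 1 else 0)
  set QB : Fin L → ℝ := fun l => qB (fun j => b j + ∑ i, c i j - if l = j then 1 else 0)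
  set G : Fin K × Fin L → Fin K × Fin L → ℝ := fun p q =>
    ((if p.1 = q.1 then QA q.1 else 0) - qA (fun i => a i + ∑ j, c i j)) *
      ((if p.2 = q.2 then QB q.2 else 0) - qB (fun j => b j + ∑ i, c i j))
  have hG (p q) : G p q = G q p := by
    simp only [G]
    rw [ite_eq_apply_comm QA p.1, ite_eq_apply_comm QB p.2]
  have hQA (k : Fin K) : QA k = qA (fun i => a i + ∑ j, c i j - if i = k then 1 else 0) := by
    simp_rw [QA, @eq_comm _ k]
  have hQB (l : Fin L) : QB l = qB (fun j => b j + ∑ i, c i j - if j = l then 1 else 0) := by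
    simp_rw [QB, @eq_comm _ l]
  calc _ = ∑ r ∈ Phi2 K L, (∏ i, ∏ j, ((c i j).choose (r i j) : ℝ)) * G (H r 0) (H r 1) :=
        sum_congr rfl fun r _ => mul_assoc _ _ _
    _ = _ := by
        rw [sum_Phi2_prod_choose_mul_eq_half_sum_pairWeight H hH c G hG,
          sum_pairWeight_mul_sub_mul_sub, q1expr]
        simp only [hQA, hQB]
        ring

/-- The `λ = 1` term of the Gaussian sampling formula equals `q₁(a,b,c)`, for
arbitrary functions `q^A`, `q^B`.  The unique partition of `{1,2}` is
`{{μ₁,ν₁}} = {{1,2}}`; for each `r ∈ Φ₂`, `H r` is a fixed list of two haplotypes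
with multiplicity matrix `r`; the brackets are the explicit two-term sums over
`I ⊆ {1}` and `J ⊆ {1}`. -/
theorem lambda_one_term_eq_q1 (K L : ℕ) (hK : 1 ≤ K) (hL : 1 ≤ L)
    (qA : (Fin K → ℕ) → ℝ) (qB : (Fin L → ℕ) → ℝ)
    (a : Fin K → ℕ) (b : Fin L → ℕ) (c : Fin K → Fin L → ℕ)
    (hc : 2 ≤ ∑ i, ∑ j, c i j)
    (H : (Fin K → Fin L → ℕ) → Fin 2 → Fin K × Fin L)
    (hH : ∀ r, ∑ i, ∑ j, r i j = 2 →
      ∀ i j, (Finset.univ.filter (fun α => H r α = (i, j))).card = r i j) :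
    (∑ r ∈ Phi2 K L,
        (∏ i, ∏ j, ((c i j).choose (r i j) : ℝ)) *
          ((if (H r 0).1 = (H r 1).1 then
              qA (fun i => a i + ∑ j, c i j - if (H r 1).1 = i then 1 else 0)
            else 0) - qA (fun i => a i + ∑ j, c i j)) *
          ((if (H r 0).2 = (H r 1).2 then
              qB (fun j => b j + ∑ i, c i j - if (H r 1).2 = j then 1 else 0)
            else 0) - qB (fun j => b j + ∑ i, c i j)))
      = q1expr qA qB a b c :=
  lambda_one_term_eq_q1_general K L qA qB a b c H hH
end

section
/- In the two-locus Moran model with generator G, for every N ≥ 1, every z ∈ ℕ^{K×L} with Σ_{ij} z_{ij} = N, and every (u,v) ∈ [K]×[L], the generator applied to the coordinate function z ↦ z_{uv} satisfies exactly: G(z ↦ z_{uv})(z) = N[ (θ_A/2) Σ_{k=1}^K (P^A_{ku} − δ_{ku}) z_{kv}/N + (θ_B/2) Σ_{l=1}^L (P^B_{lv} − δ_{lv}) z_{ul}/N + (ρ/2)( (z_{u·}/N)(z_{·v}/N) − z_{uv}/N ) ]. -/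
/-!
A jump `z → z − e_{ij} + e_{kl}` changes `z_{uv}` by `δ_{(k,l),(u,v)} − δ_{(i,j),(u,v)}`; the
truncated subtraction in `moranUpdate` is harmless because the rate vanishes when `z_{ij} = 0`.
Hence `G` applied to the coordinate is the total rate into `(u,v)` minus the total rate out of
it. Using `Σ z = N`, the resampling parts of both cancel, row-stochasticity of `P^A` and `P^B`
makes the mutation outflow `(θ_A + θ_B)/2 · z_{uv}`, and the recombination outflow is
`ρ/2 · z_{uv}` because the row and the column marginals of `z` both sum to `N`.
-/

open scoped BigOperators

/-- Transition rate of the two-locus Moran model: the rate at which a haplotype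
`(i,j)` dies and is replaced by a haplotype `(k,l)` when the configuration is `z`. -/
noncomputable def moranRate (N K L : ℕ) (θA θB ρ : ℝ)
    (PA : Fin K → Fin K → ℝ) (PB : Fin L → Fin L → ℝ)
    (z : Fin K → Fin L → ℕ) (i : Fin K) (j : Fin L) (k : Fin K) (l : Fin L) : ℝ :=
  ((z i j : ℝ) / N) *
    (((N : ℝ) ^ 2 / 2) * ((z k l : ℝ) / N)
      + (N : ℝ) * (θA / 2 * PA i k * (if j = l then 1 else 0)
          + θB / 2 * PB j l * (if i = k then 1 else 0)
          + ρ / 2 * ((∑ l', (z k l' : ℝ)) / N) * ((∑ k', (z k' l : ℝ)) / N)))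

/-- The configuration `z − e_{ij} + e_{kl}`. -/
def moranUpdate {K L : ℕ} (z : Fin K → Fin L → ℕ)
    (i : Fin K) (j : Fin L) (k : Fin K) (l : Fin L) : Fin K → Fin L → ℕ :=
  fun i' j' => z i' j' - (if i' = i ∧ j' = j then 1 else 0)
    + (if i' = k ∧ j' = l then 1 else 0)

/-- Generator of the two-locus Moran model acting on `f : ℕ^{K×L} → ℝ`. -/
noncomputable def moranGen (N K L : ℕ) (θA θB ρ : ℝ)
    (PA : Fin K → Fin K → ℝ) (PB : Fin L → Fin L → ℝ)
    (f : (Fin K → Fin L → ℕ) → ℝ) (z : Fin K → Fin L → ℕ) : ℝ :=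
  ∑ i, ∑ j, ∑ k, ∑ l,
    moranRate N K L θA θB ρ PA PB z i j k l * (f (moranUpdate z i j k l) - f z)

section Update

variable {K L : ℕ} {R : Type*} [CommRing R] (z : Fin K → Fin L → ℕ)

theorem moranUpdate_cast_of_ne_zero {i : Fin K} {j : Fin L} (hij : z i j ≠ 0)
    (k : Fin K) (l : Fin L) (u : Fin K) (v : Fin L) :
    (moranUpdate z i j k l u v : R)
      = z u v - (if i = u ∧ j = v then 1 else 0) + (if k = u ∧ l = v then 1 else 0) := by
  unfold moranUpdate
  by_cases h : i = u ∧ j = v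
  · obtain ⟨rfl, rfl⟩ := h
    simp [Nat.cast_sub (Nat.one_le_iff_ne_zero.mpr hij), eq_comm]
  · simp [h, eq_comm]

theorem sum_mul_moranUpdate_sub (r : Fin K → Fin L → Fin K → Fin L → R)
    (hr : ∀ i j k l, z i j = 0 → r i j k l = 0) (u : Fin K) (v : Fin L) :
    ∑ i, ∑ j, ∑ k, ∑ l, r i j k l * ((moranUpdate z i j k l u v : R) - z u v)
      = ∑ i, ∑ j, r i j u v - ∑ k, ∑ l, r u v k l := by
  have hterm : ∀ i j k l, r i j k l * ((moranUpdate z i j k l u v : R) - z u v)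
      = r i j k l * (if k = u ∧ l = v then 1 else 0)
        - r i j k l * (if i = u ∧ j = v then 1 else 0) := by
    intro i j k l
    by_cases hij : z i j = 0
    · simp [hr i j k l hij]
    · rw [moranUpdate_cast_of_ne_zero z hij]
      ring
  simp only [hterm, Finset.sum_sub_distrib, ite_and, mul_ite, mul_one, mul_zero]
  simp [Finset.sum_ite_eq']

end Update

section Rate

variable {N K L : ℕ} {θA θB ρ : ℝ} {PA : Fin K → Fin K → ℝ} {PB : Fin L → Fin L → ℝ}
  {z : Fin K → Fin L → ℕ}

theorem moranRate_eq_zero_of_eq_zero {i : Fin K} {j : Fin L} (h : z i j = 0)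
    (k : Fin K) (l : Fin L) : moranRate N K L θA θB ρ PA PB z i j k l = 0 := by
  simp [moranRate, h]

theorem moranRate_eq (hN : N ≠ 0) (i : Fin K) (j : Fin L) (k : Fin K) (l : Fin L) :
    moranRate N K L θA θB ρ PA PB z i j k l
      = z i j * (z k l / 2 + ρ / (2 * N ^ 2) * ((∑ l', (z k l' : ℝ)) * (∑ k', (z k' l : ℝ))))
        + θA / 2 * (if j = l then PA i k * z i j else 0)
        + θB / 2 * (if i = k then PB j l * z i j else 0) := by
  unfold moranRate
  split_ifs <;> field_simp <;> ring

theorem sum_moranRate_into (hN : N ≠ 0) (hz : ∑ i, ∑ j, z i j = N) (u : Fin K) (v : Fin L) :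
    ∑ i, ∑ j, moranRate N K L θA θB ρ PA PB z i j u v
      = N * z u v / 2 + θA / 2 * ∑ i, PA i u * z i v + θB / 2 * ∑ j, PB j v * z u j
        + ρ / 2 * ((∑ l, (z u l : ℝ)) * (∑ k, (z k v : ℝ))) / N := by
  have hzR : ∑ i, ∑ j, (z i j : ℝ) = N := by exact_mod_cast hz
  simp only [moranRate_eq hN, Finset.sum_add_distrib, ← Finset.mul_sum, ← Finset.sum_mul, hzR]
  simp only [Finset.sum_ite_eq', Finset.mem_univ, ↓reduceIte, Finset.sum_ite_irrel,
    Finset.sum_const_zero]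
  field_simp
  ring

theorem sum_moranRate_out (hN : N ≠ 0) (hz : ∑ i, ∑ j, z i j = N)
    (hPA : ∀ i, ∑ k, PA i k = 1) (hPB : ∀ j, ∑ l, PB j l = 1) (u : Fin K) (v : Fin L) :
    ∑ k, ∑ l, moranRate N K L θA θB ρ PA PB z u v k l
      = z u v * (N / 2 + θA / 2 + θB / 2 + ρ / 2) := by
  have hzR : ∑ i, ∑ j, (z i j : ℝ) = N := by exact_mod_cast hz
  have hrc : ∑ k, (∑ l', (z k l' : ℝ)) * ∑ l, ∑ k', (z k' l : ℝ) = N ^ 2 := by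
    rw [← Finset.sum_mul, hzR, Finset.sum_comm, hzR, sq]
  have hA : ∑ k, ∑ l, (if v = l then PA u k * z u v else 0) = (z u v : ℝ) := by
    simp [← Finset.sum_mul, hPA u]
  have hB : ∑ k, ∑ l, (if u = k then PB v l * z u v else 0) = (z u v : ℝ) := by
    simp [← Finset.sum_mul, hPB v]
  simp only [moranRate_eq hN, Finset.sum_add_distrib, ← Finset.mul_sum, ← Finset.sum_div, hzR,
    hrc, hA, hB]
  field_simp
  ring

end Rate

theorem sum_sub_ite_mul {ι R : Type*} [Fintype ι] [DecidableEq ι] [Ring R] (p x : ι → R) (u : ι) :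
    ∑ k, (p k - if k = u then 1 else 0) * x k = ∑ k, p k * x k - x u := by
  simp [sub_mul, Finset.sum_sub_distrib]

theorem moranGen_coord_general (N K L : ℕ) (hN : 1 ≤ N) (θA θB ρ : ℝ)
    (PA : Fin K → Fin K → ℝ) (PB : Fin L → Fin L → ℝ)
    (hPA : (∀ i k, 0 ≤ PA i k) ∧ ∀ i, ∑ k, PA i k = 1)
    (hPB : (∀ j l, 0 ≤ PB j l) ∧ ∀ j, ∑ l, PB j l = 1)
    (z : Fin K → Fin L → ℕ) (hz : ∑ i, ∑ j, z i j = N)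
    (u : Fin K) (v : Fin L) :
    moranGen N K L θA θB ρ PA PB (fun z' => (z' u v : ℝ)) z
      = (N : ℝ) * (θA / 2 * ∑ k, (PA k u - if k = u then 1 else 0) * ((z k v : ℝ) / N)
          + θB / 2 * ∑ l, (PB l v - if l = v then 1 else 0) * ((z u l : ℝ) / N)
          + ρ / 2 * (((∑ l, (z u l : ℝ)) / N) * ((∑ k, (z k v : ℝ)) / N)
              - (z u v : ℝ) / N)) := by
  have hN0 : N ≠ 0 := Nat.one_le_iff_ne_zero.mp hN
  simp only [moranGen]
  rw [sum_mul_moranUpdate_sub z _ (fun i j k l h => moranRate_eq_zero_of_eq_zero h k l),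
    sum_moranRate_into hN0 hz, sum_moranRate_out hN0 hz hPA.2 hPB.2, sum_sub_ite_mul,
    sum_sub_ite_mul]
  simp only [mul_div_assoc', ← Finset.sum_div]
  field_simp
  ring

/-- Exact action of the Moran generator on the haplotype-count coordinate
`z ↦ z_{uv}`. -/
theorem moranGen_coord (N K L : ℕ) (hN : 1 ≤ N) (hK : 1 ≤ K) (hL : 1 ≤ L)
    (θA θB ρ : ℝ) (hθA : 0 ≤ θA) (hθB : 0 ≤ θB) (hρ : 0 ≤ ρ)
    (PA : Fin K → Fin K → ℝ) (PB : Fin L → Fin L → ℝ)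
    (hPA : (∀ i k, 0 ≤ PA i k) ∧ ∀ i, ∑ k, PA i k = 1)
    (hPB : (∀ j l, 0 ≤ PB j l) ∧ ∀ j, ∑ l, PB j l = 1)
    (z : Fin K → Fin L → ℕ) (hz : ∑ i, ∑ j, z i j = N)
    (u : Fin K) (v : Fin L) :
    moranGen N K L θA θB ρ PA PB (fun z' => (z' u v : ℝ)) z
      = (N : ℝ) * (θA / 2 * ∑ k, (PA k u - if k = u then 1 else 0) * ((z k v : ℝ) / N)
          + θB / 2 * ∑ l, (PB l v - if l = v then 1 else 0) * ((z u l : ℝ) / N)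
          + ρ / 2 * (((∑ l, (z u l : ℝ)) / N) * ((∑ k, (z k v : ℝ)) / N)
              - (z u v : ℝ) / N)) :=
  moranGen_coord_general N K L hN θA θB ρ PA PB hPA hPB z hz u v
end

section
/- In the two-locus Moran model with generator G, define for (u,v) ∈ [K]×[L] the linkage-disequilibrium function f_{uv}(z) = z_{uv}/N − (z_{u·}/N)(z_{·v}/N), and write d_{uv}(z) = f_{uv}(z). Then there exists a constant C, depending only on K and L, such that for all N ≥ 1 and all z ∈ ℕ^{K×L} with Σ_{ij} z_{ij} = N: | G(f_{uv})(z) + ((ρ/2) + 1) d_{uv}(z) − (θ_A/2) Σ_{k=1}^K (P^A_{ku} − δ_{ku}) d_{kv}(z) − (θ_B/2) Σ_{l=1}^L (P^B_{lv} − δ_{lv}) d_{ul}(z) | ≤ C (1 + θ_A + θ_B + ρ)/N. -/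
/-!
Write `x = z / N` for the haplotype frequencies, `p, q` for its marginals and
`d = x_{uv} - p_u q_v`. A jump `(i,j) → (k,l)` moves `x` by `(e_{kl} - e_{ij}) / N`, and since `d`
is quadratic its change is exactly a first-order term over `N` minus a product of marginal jumps
over `N²`. The rate splits into resampling, the two mutation kernels and recombination, and
summing the increment against each kernel is a closed computation: resampling contributes only
through the second-order term, giving `-d`; mutation gives the linear terms; recombination gives
`-(ρ/2)(1 + 1/N) d`. So `G d` equals the claimed drift up to exactly `-(ρ / 2N) d`, and `|d| ≤ 1`.
-/

open scoped BigOperators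

/-- The linkage-disequilibrium coordinate `d_{uv}(z) = z_{uv}/N − (z_{u·}/N)(z_{·v}/N)`. -/
noncomputable def moranLD (N : ℕ) {K L : ℕ} (z : Fin K → Fin L → ℕ)
    (u : Fin K) (v : Fin L) : ℝ :=
  (z u v : ℝ) / N - ((∑ l, (z u l : ℝ)) / N) * ((∑ k, (z k v : ℝ)) / N)

open Finset

section LinkageDisequilibrium

variable {α β : Type*} [Fintype α] [Fintype β]

def linkageDiseq (x : α → β → ℝ) (u : α) (v : β) : ℝ :=
  x u v - (∑ l, x u l) * ∑ k, x k v

variable {x : α → β → ℝ}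

theorem linkageDiseq_transpose (u : α) (v : β) :
    linkageDiseq (fun b a => x a b) v u = linkageDiseq x u v := by
  unfold linkageDiseq
  ring

theorem abs_linkageDiseq_le_one (hx₀ : ∀ i j, 0 ≤ x i j) (hx : ∑ i, ∑ j, x i j = 1)
    (u : α) (v : β) : |linkageDiseq x u v| ≤ 1 := by
  have hrow : ∀ i, 0 ≤ ∑ j, x i j := fun i => sum_nonneg fun j _ => hx₀ i j
  have hp : ∑ l, x u l ≤ 1 := hx ▸ single_le_sum (fun i _ => hrow i) (mem_univ u)
  have hq : ∑ k, x k v ≤ 1 :=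
    hx ▸ sum_le_sum fun i _ => single_le_sum (fun j _ => hx₀ i j) (mem_univ v)
  have hxp : x u v ≤ ∑ l, x u l := single_le_sum (fun j _ => hx₀ u j) (mem_univ v)
  have hpq₀ : 0 ≤ (∑ l, x u l) * ∑ k, x k v :=
    mul_nonneg (hrow u) (sum_nonneg fun k _ => hx₀ k v)
  have hpq : (∑ l, x u l) * ∑ k, x k v ≤ 1 :=
    mul_le_one₀ hp (sum_nonneg fun k _ => hx₀ k v) hq
  rw [linkageDiseq, abs_le]
  constructor <;> linarith [hx₀ u v]

variable [DecidableEq α] [DecidableEq β]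

/-- `N` times the change of `linkageDiseq x u v` when `x` moves by `(e_{kl} - e_{ij}) / N`, with
`s = 1 / N`; the last term is the exact second-order part, as `linkageDiseq` is quadratic. -/
def linkageDiseqIncrement (x : α → β → ℝ) (s : ℝ) (u : α) (v : β) (i : α) (j : β) (k : α) (l : β) : ℝ :=
  (if u = k then 1 else 0) * (if v = l then 1 else 0)
    - (if u = i then 1 else 0) * (if v = j then 1 else 0)
    - (∑ l', x u l') * ((if v = l then 1 else 0) - (if v = j then 1 else 0))
    - (∑ k', x k' v) * ((if u = k then 1 else 0) - (if u = i then 1 else 0))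
    - s * (((if u = k then 1 else 0) - (if u = i then 1 else 0))
        * ((if v = l then 1 else 0) - (if v = j then 1 else 0)))

theorem sum_resampling_linkageDiseqIncrement (hx : ∑ i, ∑ j, x i j = 1) (s : ℝ) (u : α) (v : β) :
    ∑ i, ∑ j, ∑ k, ∑ l, x i j * x k l * linkageDiseqIncrement x s u v i j k l
      = -(2 * s) * linkageDiseq x u v := by
  simp only [linkageDiseqIncrement, linkageDiseq, mul_sub, mul_ite, mul_one, mul_zero, sum_sub_distrib,
    sum_ite_irrel, sum_const_zero, sum_ite_eq, mem_univ, if_true, ← sum_mul, ← mul_sum, hx]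
  ring

theorem sum_recombination_linkageDiseqIncrement (hx : ∑ i, ∑ j, x i j = 1) (s : ℝ) (u : α) (v : β) :
    ∑ i, ∑ j, ∑ k, ∑ l, x i j * ((∑ l', x k l') * ∑ k', x k' l) * linkageDiseqIncrement x s u v i j k l
      = -(1 + s) * linkageDiseq x u v := by
  have hx' : ∑ j, ∑ i, x i j = 1 := by rwa [sum_comm]
  simp only [linkageDiseqIncrement, linkageDiseq, mul_sub, mul_ite, mul_one, mul_zero, sum_sub_distrib,
    sum_ite_irrel, sum_const_zero, sum_ite_eq, mem_univ, if_true, ← sum_mul, ← mul_sum, hx, hx']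
  ring

theorem sum_mutation_left_linkageDiseqIncrement {P : α → α → ℝ} (hP : ∀ i, ∑ k, P i k = 1) (s : ℝ)
    (u : α) (v : β) :
    ∑ i, ∑ j, ∑ k, ∑ l, x i j * (P i k * if j = l then 1 else 0) * linkageDiseqIncrement x s u v i j k l
      = ∑ k, (P k u - if k = u then 1 else 0) * linkageDiseq x k v := by
  simp only [linkageDiseqIncrement, linkageDiseq, mul_sub, sub_mul, mul_ite, ite_mul, mul_one, mul_zero,
    one_mul, zero_mul, sum_sub_distrib, sum_ite_irrel, sum_const_zero, sum_ite_eq, sum_ite_eq',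
    mem_univ, if_true, ← sum_mul, ← mul_sum, hP]
  have hxP : ∑ k, P k u * x k v = ∑ k, x k v * P k u := sum_congr rfl fun _ _ => mul_comm _ _
  have hpP : ∑ k, P k u * ((∑ l, x k l) * ∑ k', x k' v)
      = (∑ k, (∑ l, x k l) * P k u) * ∑ k', x k' v := by
    rw [sum_mul]; exact sum_congr rfl fun _ _ => by ring
  linear_combination hpP - hxP

theorem linkageDiseqIncrement_transpose (s : ℝ) (u : α) (v : β) (i : α) (j : β) (k : α) (l : β) :
    linkageDiseqIncrement (fun b a => x a b) s v u j i l k = linkageDiseqIncrement x s u v i j k l := by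
  unfold linkageDiseqIncrement
  ring

theorem sum_mutation_right_linkageDiseqIncrement {P : β → β → ℝ} (hP : ∀ j, ∑ l, P j l = 1) (s : ℝ)
    (u : α) (v : β) :
    ∑ i, ∑ j, ∑ k, ∑ l, x i j * (P j l * if i = k then 1 else 0) * linkageDiseqIncrement x s u v i j k l
      = ∑ l, (P l v - if l = v then 1 else 0) * linkageDiseq x u l := by
  simp only [← linkageDiseqIncrement_transpose (x := x), ← linkageDiseq_transpose (x := x)]
  rw [← sum_mutation_left_linkageDiseqIncrement hP s v u, sum_comm]
  exact sum_congr rfl fun j _ => sum_congr rfl fun i _ => sum_comm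

end LinkageDisequilibrium

section Moran

variable {K L N : ℕ}

noncomputable def moranFreq (N : ℕ) (z : Fin K → Fin L → ℕ) (a : Fin K) (b : Fin L) : ℝ := (z a b : ℝ) / N

theorem moranFreq_nonneg (z : Fin K → Fin L → ℕ) (a : Fin K) (b : Fin L) :
    0 ≤ moranFreq N z a b :=
  div_nonneg (Nat.cast_nonneg _) (Nat.cast_nonneg _)

theorem sum_moranFreq (hN : N ≠ 0) {z : Fin K → Fin L → ℕ} (hz : ∑ i, ∑ j, z i j = N) :
    ∑ i, ∑ j, moranFreq N z i j = 1 := by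
  simp only [moranFreq, ← sum_div, ← Nat.cast_sum, hz]
  exact div_self (Nat.cast_ne_zero.mpr hN)

theorem moranLD_eq_linkageDiseq (z : Fin K → Fin L → ℕ) :
    moranLD N z = linkageDiseq (moranFreq N z) := by
  ext u v
  simp only [moranLD, linkageDiseq, moranFreq, sum_div]

theorem cast_moranUpdate {z : Fin K → Fin L → ℕ} {i : Fin K} {j : Fin L} (hz : 0 < z i j)
    (k : Fin K) (l : Fin L) (a : Fin K) (b : Fin L) :
    (moranUpdate z i j k l a b : ℝ) = z a b + (if a = k then 1 else 0) * (if b = l then 1 else 0)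
      - (if a = i then 1 else 0) * (if b = j then 1 else 0) := by
  have hle : (if a = i ∧ b = j then 1 else 0) ≤ z a b := by
    split_ifs with h
    · obtain ⟨rfl, rfl⟩ := h
      exact hz
    · exact Nat.zero_le _
  rw [moranUpdate, Nat.cast_add, Nat.cast_sub hle]
  push_cast
  simp only [ite_and, ite_zero_mul_ite_zero, mul_one]
  ring

theorem moranLD_moranUpdate_sub (hN : N ≠ 0) {z : Fin K → Fin L → ℕ} {i : Fin K} {j : Fin L}
    (hz : 0 < z i j) (k : Fin K) (l : Fin L) (u : Fin K) (v : Fin L) :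
    moranLD N (moranUpdate z i j k l) u v - moranLD N z u v
      = linkageDiseqIncrement (moranFreq N z) (1 / N) u v i j k l / N := by
  simp only [moranLD, linkageDiseqIncrement, moranFreq, cast_moranUpdate hz, sum_add_distrib,
    sum_sub_distrib, mul_ite, mul_one, mul_zero, sum_ite_irrel, sum_const_zero, sum_ite_eq',
    mem_univ, if_true, ← sum_div]
  field_simp
  ring

theorem moranRate_eq_moranFreq (θA θB ρ : ℝ) (PA : Fin K → Fin K → ℝ) (PB : Fin L → Fin L → ℝ)
    (z : Fin K → Fin L → ℕ) (i : Fin K) (j : Fin L) (k : Fin K) (l : Fin L) :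
    letI x := moranFreq N z
    moranRate N K L θA θB ρ PA PB z i j k l
      = N ^ 2 / 2 * (x i j * x k l)
        + N * (θA / 2 * (x i j * (PA i k * if j = l then 1 else 0))
          + θB / 2 * (x i j * (PB j l * if i = k then 1 else 0))
          + ρ / 2 * (x i j * ((∑ l', x k l') * ∑ k', x k' l))) := by
  simp only [moranRate, moranFreq, sum_div]
  ring

theorem moranGen_moranLD_sub_drift (hN : N ≠ 0) {θA θB ρ : ℝ} {PA : Fin K → Fin K → ℝ}
    {PB : Fin L → Fin L → ℝ} (hPA : ∀ i, ∑ k, PA i k = 1) (hPB : ∀ j, ∑ l, PB j l = 1)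
    {z : Fin K → Fin L → ℕ} (hz : ∑ i, ∑ j, z i j = N) (u : Fin K) (v : Fin L) :
    moranGen N K L θA θB ρ PA PB (fun z' => moranLD N z' u v) z
        + (ρ / 2 + 1) * moranLD N z u v
        - θA / 2 * ∑ k, (PA k u - if k = u then 1 else 0) * moranLD N z k v
        - θB / 2 * ∑ l, (PB l v - if l = v then 1 else 0) * moranLD N z u l
      = -(ρ / (2 * N)) * moranLD N z u v := by
  set x := moranFreq N z with hx_def
  set Δ := linkageDiseqIncrement x (1 / N) u v
  have hterm : ∀ i j k l, moranRate N K L θA θB ρ PA PB z i j k l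
      * (moranLD N (moranUpdate z i j k l) u v - moranLD N z u v)
      = N / 2 * (x i j * x k l * Δ i j k l)
        + θA / 2 * (x i j * (PA i k * if j = l then 1 else 0) * Δ i j k l)
        + θB / 2 * (x i j * (PB j l * if i = k then 1 else 0) * Δ i j k l)
        + ρ / 2 * (x i j * ((∑ l', x k l') * ∑ k', x k' l) * Δ i j k l) := by
    intro i j k l
    rcases Nat.eq_zero_or_pos (z i j) with hzij | hzij
    · simp [moranRate, hx_def, moranFreq, hzij]
    · rw [moranLD_moranUpdate_sub hN hzij, moranRate_eq_moranFreq]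
      field_simp
      ring
  simp only [moranGen, hterm, sum_add_distrib, ← mul_sum]
  rw [sum_resampling_linkageDiseqIncrement (sum_moranFreq hN hz),
    sum_mutation_left_linkageDiseqIncrement hPA, sum_mutation_right_linkageDiseqIncrement hPB,
    sum_recombination_linkageDiseqIncrement (sum_moranFreq hN hz), moranLD_eq_linkageDiseq]
  field_simp
  ring

end Moran

theorem moranGen_LD_drift_general (K L : ℕ) :
    ∃ C : ℝ, 0 < C ∧
      ∀ (θA θB ρ : ℝ), 0 ≤ θA → 0 ≤ θB → 0 ≤ ρ →
      ∀ (PA : Fin K → Fin K → ℝ) (PB : Fin L → Fin L → ℝ),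
        ((∀ i k, 0 ≤ PA i k) ∧ ∀ i, ∑ k, PA i k = 1) →
        ((∀ j l, 0 ≤ PB j l) ∧ ∀ j, ∑ l, PB j l = 1) →
      ∀ N : ℕ, 1 ≤ N →
      ∀ z : Fin K → Fin L → ℕ, ∑ i, ∑ j, z i j = N →
      ∀ (u : Fin K) (v : Fin L),
        |moranGen N K L θA θB ρ PA PB (fun z' => moranLD N z' u v) z
            + (ρ / 2 + 1) * moranLD N z u v
            - θA / 2 * ∑ k, (PA k u - if k = u then 1 else 0) * moranLD N z k v
            - θB / 2 * ∑ l, (PB l v - if l = v then 1 else 0) * moranLD N z u l|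
          ≤ C * (1 + θA + θB + ρ) / N := by
  refine ⟨1, one_pos, ?_⟩
  rintro θA θB ρ hθA hθB hρ PA PB ⟨-, hPA⟩ ⟨-, hPB⟩ N hN z hz u v
  have hN₀ : N ≠ 0 := Nat.one_le_iff_ne_zero.mp hN
  have hN' : (0 : ℝ) < N := by exact_mod_cast hN
  have hd : |moranLD N z u v| ≤ 1 := by
    rw [moranLD_eq_linkageDiseq]
    exact abs_linkageDiseq_le_one (moranFreq_nonneg z) (sum_moranFreq hN₀ hz) u v
  rw [moranGen_moranLD_sub_drift hN₀ hPA hPB hz]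
  calc |-(ρ / (2 * N)) * moranLD N z u v|
      = ρ / (2 * N) * |moranLD N z u v| := by
        rw [abs_mul, abs_neg, abs_of_nonneg (by positivity)]
    _ ≤ ρ / (2 * N) := mul_le_of_le_one_right (by positivity) hd
    _ ≤ 1 * (1 + θA + θB + ρ) / N := by
        rw [div_le_div_iff₀ (by positivity) hN']
        nlinarith

/-- The drift of each linkage-disequilibrium coordinate under the Moran generator:
up to an error of order `(1 + θ_A + θ_B + ρ)/N` with constant depending only on
`K` and `L`, `G d_{uv} = −(ρ/2 + 1) d_{uv} + (θ_A/2) Σ_k (P^A_{ku} − δ_{ku}) d_{kv}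
+ (θ_B/2) Σ_l (P^B_{lv} − δ_{lv}) d_{ul}`. -/
theorem moranGen_LD_drift (K L : ℕ) (hK : 1 ≤ K) (hL : 1 ≤ L) :
    ∃ C : ℝ, 0 < C ∧
      ∀ (θA θB ρ : ℝ), 0 ≤ θA → 0 ≤ θB → 0 ≤ ρ →
      ∀ (PA : Fin K → Fin K → ℝ) (PB : Fin L → Fin L → ℝ),
        ((∀ i k, 0 ≤ PA i k) ∧ ∀ i, ∑ k, PA i k = 1) →
        ((∀ j l, 0 ≤ PB j l) ∧ ∀ j, ∑ l, PB j l = 1) →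
      ∀ N : ℕ, 1 ≤ N →
      ∀ z : Fin K → Fin L → ℕ, ∑ i, ∑ j, z i j = N →
      ∀ (u : Fin K) (v : Fin L),
        |moranGen N K L θA θB ρ PA PB (fun z' => moranLD N z' u v) z
            + (ρ / 2 + 1) * moranLD N z u v
            - θA / 2 * ∑ k, (PA k u - if k = u then 1 else 0) * moranLD N z k v
            - θB / 2 * ∑ l, (PB l v - if l = v then 1 else 0) * moranLD N z u l|
          ≤ C * (1 + θA + θB + ρ) / N :=
  moranGen_LD_drift_general K L
end
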